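/- Let d, D, L be positive integers. Let A₁,…,A_d be D×D complex matrices with ∑_i A_i A_i† = 𝟙, and let Λ be a D×D positive semidefinite matrix with tr Λ = 1 and ∑_i A_i† Λ A_i = Λ. Let P be an orthogonal projection with PΛ = ΛP; set Λ̃ = PΛP and δ = tr(Λ − Λ̃). Let σ_A be the d^L×d^L matrix with entries (σ_A)_{(i₁…i_L),(j₁…j_L)} = tr(A_{j_L}†⋯A_{j_1}† Λ̃ A_{i_1}⋯A_{i_L}) and σ_{A,P} the d^L×d^L matrix with entries tr(P A_{j_L}†⋯A_{j_1}† Λ̃ A_{i_1}⋯A_{i_L} P). Then ‖σ_A − σ_{A,P}‖₁ ≤ 2δ. -/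

import Mathlib

open Matrix ComplexOrder

/-- The trace norm (sum of singular values) of a complex square matrix, defined as the
trace of the positive semidefinite square root of `Mᴴ * M`. -/
noncomputable def traceNorm {n : Type*} [Fintype n] [DecidableEq n]
    (M : Matrix n n ℂ) : ℝ :=
  (((Matrix.posSemidef_conjTranspose_mul_self M).1.eigenvectorUnitary : Matrix n n ℂ) *
      diagonal (((↑) : ℝ → ℂ) ∘ Real.sqrt ∘ (Matrix.posSemidef_conjTranspose_mul_self M).1.eigenvalues) *
      (star (Matrix.posSemidef_conjTranspose_mul_self M).1.eigenvectorUnitary :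
        Matrix n n ℂ)).trace.re

/-- The `d^L × d^L` matrix `σ_A` with entries
`tr (A_{j_L}ᴴ ⋯ A_{j_1}ᴴ * Λ̃ * A_{i_1} ⋯ A_{i_L})`. -/
noncomputable def sigmaA (d D L : ℕ) (A : Fin d → Matrix (Fin D) (Fin D) ℂ)
    (Λt : Matrix (Fin D) (Fin D) ℂ) :
    Matrix (Fin L → Fin d) (Fin L → Fin d) ℂ :=
  fun i j =>
    (((List.ofFn fun t => A (j t)).prod)ᴴ * Λt * (List.ofFn fun t => A (i t)).prod).trace

/-- The `d^L × d^L` matrix `σ_{A,P}` with entries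
`tr (P * A_{j_L}ᴴ ⋯ A_{j_1}ᴴ * Λ̃ * A_{i_1} ⋯ A_{i_L} * P)`. -/
noncomputable def sigmaAP (d D L : ℕ) (A : Fin d → Matrix (Fin D) (Fin D) ℂ)
    (Λt P : Matrix (Fin D) (Fin D) ℂ) :
    Matrix (Fin L → Fin d) (Fin L → Fin d) ℂ :=
  fun i j =>
    (P * ((List.ofFn fun t => A (j t)).prod)ᴴ * Λt * (List.ofFn fun t => A (i t)).prod
      * P).trace

/-!
Write `Q = 1 - P`, `Λ̃ = P Λ P = Rᴴ R` and `B_w` for the word products. Because `P` is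
idempotent, `tr X - tr (P X P) = tr (Q X Q)`, so the `(i, j)` entry of `σ_A - σ_{A,P}` is
`tr ((R B_j Q)ᴴ (R B_i Q))`: the difference is a Gram matrix, hence positive semidefinite, and
its trace norm is its trace `tr (Q Φᴸ(Λ̃) Q)`, where `Φ X = ∑ A_iᴴ X A_i`. Since `P` commutes with
`Λ`, `Λ - Λ̃ = Q Λ Q ≥ 0`; positivity of `Φ` and `Φ Λ = Λ` then give `Φᴸ(Λ̃) ≤ Λ`, so the trace
norm is at most `tr (Q Λ Q) = δ ≤ 2δ`.
-/

theorem traceNorm_eq_trace_re_of_posSemidef {n : Type*} [Fintype n] [DecidableEq n]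
    {M : Matrix n n ℂ} (hM : M.PosSemidef) : traceNorm M = M.trace.re := by
  open scoped MatrixOrder in
  have hsqrt : (posSemidef_conjTranspose_mul_self M).1.cfc Real.sqrt = M := by
    rw [← IsHermitian.cfc_eq, ← cfcₙ_eq_cfc,
      ← CFC.sqrt_eq_real_sqrt _ (posSemidef_conjTranspose_mul_self M).nonneg, hM.1.eq,
      CFC.sqrt_mul_self M hM.nonneg]
  conv_rhs => rw [← hsqrt, IsHermitian.cfc, Unitary.conjStarAlgAut_apply]
  rfl

section Words

variable {ι n R : Type*} [Fintype n] [DecidableEq n] [Semiring R]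

def wordProd (A : ι → Matrix n n R) {L : ℕ} (w : Fin L → ι) : Matrix n n R :=
  (List.ofFn fun t => A (w t)).prod

theorem wordProd_cons (A : ι → Matrix n n R) {L : ℕ} (i : ι) (w : Fin L → ι) :
    wordProd A (Fin.cons i w : Fin (L + 1) → ι) = A i * wordProd A w := by
  simp [wordProd, List.ofFn_succ]

end Words

section DualChannel

variable {ι n R : Type*} [Fintype ι] [Fintype n] [CommRing R] [StarRing R]

def dualChannel (A : ι → Matrix n n R) (X : Matrix n n R) : Matrix n n R :=
  ∑ i, (A i)ᴴ * X * A i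

theorem dualChannel_sub (A : ι → Matrix n n R) (X Y : Matrix n n R) :
    dualChannel A (X - Y) = dualChannel A X - dualChannel A Y := by
  simp only [dualChannel, Matrix.mul_sub, Matrix.sub_mul, Finset.sum_sub_distrib]

theorem sum_conjTranspose_wordProd_mul_mul_wordProd [DecidableEq n] (A : ι → Matrix n n R)
    (L : ℕ) (X : Matrix n n R) :
    ∑ w : Fin L → ι, (wordProd A w)ᴴ * X * wordProd A w = (dualChannel A)^[L] X := by
  induction L generalizing X with
  | zero => simp [wordProd]
  | succ L ih =>
    rw [Function.iterate_succ_apply, ← ih, ← (Fin.consEquiv fun _ => ι).sum_comp,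
      Fintype.sum_prod_type, Finset.sum_comm]
    refine Finset.sum_congr rfl fun w _ => ?_
    simp only [Fin.consEquiv, Equiv.coe_fn_mk, wordProd_cons, conjTranspose_mul, dualChannel,
      Finset.mul_sum, Finset.sum_mul, Matrix.mul_assoc]

variable [PartialOrder R] [StarOrderedRing R]

theorem Matrix.PosSemidef.dualChannel {A : ι → Matrix n n R} {X : Matrix n n R}
    (hX : X.PosSemidef) : (dualChannel A X).PosSemidef :=
  posSemidef_sum _ fun i _ => hX.conjTranspose_mul_mul_same (A i)

theorem sub_dualChannel_iterate_posSemidef {A : ι → Matrix n n R} {Λ X : Matrix n n R}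
    (hΛ : dualChannel A Λ = Λ) (hX : (Λ - X).PosSemidef) (L : ℕ) :
    (Λ - (dualChannel A)^[L] X).PosSemidef := by
  induction L generalizing X with
  | zero => exact hX
  | succ L ih =>
    rw [Function.iterate_succ_apply]
    refine ih ?_
    rw [← hΛ, ← dualChannel_sub]
    exact hX.dualChannel

end DualChannel

theorem posSemidef_of_trace_conjTranspose_mul {κ m n R : Type*} [Fintype κ] [Fintype m]
    [Fintype n] [CommRing R] [PartialOrder R] [StarRing R] [StarOrderedRing R]
    (V : κ → Matrix m n R) : (of fun i j => ((V j)ᴴ * V i).trace).PosSemidef := by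
  convert posSemidef_conjTranspose_mul_self (of fun (p : m × n) i => star (V i p.1 p.2))
  ext i j
  simp only [of_apply, trace, diag, mul_apply, conjTranspose_apply, star_star,
    Fintype.sum_prod_type]
  rw [Finset.sum_comm]
  exact Finset.sum_congr rfl fun _ _ => Finset.sum_congr rfl fun _ _ => mul_comm _ _

section Projection

variable {n R : Type*} [Fintype n] [DecidableEq n] [CommRing R] {P : Matrix n n R}

theorem trace_sub_trace_mul_mul_of_isIdempotentElem (hP : IsIdempotentElem P)
    (X : Matrix n n R) : X.trace - (P * X * P).trace = ((1 - P) * X * (1 - P)).trace := by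
  have htrace : ∀ {E : Matrix n n R}, IsIdempotentElem E → (E * X * E).trace = (E * X).trace :=
    fun hE => by rw [trace_mul_cycle, hE.eq]
  rw [htrace hP, htrace hP.one_sub, Matrix.sub_mul, one_mul, trace_sub]

theorem one_sub_mul_mul_one_sub_of_commute (hP : IsIdempotentElem P) {X : Matrix n n R}
    (hPX : P * X = X * P) : (1 - P) * X * (1 - P) = X - P * X * P := by
  have hPXP : P * X * P = X * P := by rw [hPX, Matrix.mul_assoc, hP.eq]
  rw [Matrix.sub_mul, one_mul, Matrix.mul_sub, mul_one, Matrix.sub_mul, hPXP, ← hPX]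
  abel

end Projection

section Sigma

variable {d D L : ℕ} {A : Fin d → Matrix (Fin D) (Fin D) ℂ} {Λt P : Matrix (Fin D) (Fin D) ℂ}

theorem sigmaA_sub_sigmaAP_apply (hP : IsIdempotentElem P) (i j : Fin L → Fin d) :
    (sigmaA d D L A Λt - sigmaAP d D L A Λt P) i j =
      ((1 - P) * ((wordProd A j)ᴴ * Λt * wordProd A i) * (1 - P)).trace := by
  rw [← trace_sub_trace_mul_mul_of_isIdempotentElem hP]
  simp only [Matrix.sub_apply, sigmaA, sigmaAP, wordProd, Matrix.mul_assoc]

theorem trace_sigmaA_sub_sigmaAP (hP : IsIdempotentElem P) :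
    (sigmaA d D L A Λt - sigmaAP d D L A Λt P).trace =
      ((1 - P) * (dualChannel A)^[L] Λt * (1 - P)).trace := by
  simp only [trace, diag, sigmaA_sub_sigmaAP_apply hP]
  rw [← sum_conjTranspose_wordProd_mul_mul_wordProd, Finset.mul_sum, Finset.sum_mul]
  exact (trace_sum _ _).symm

theorem sigmaA_sub_sigmaAP_posSemidef (hΛt : Λt.PosSemidef) (hPh : Pᴴ = P)
    (hP : IsIdempotentElem P) : (sigmaA d D L A Λt - sigmaAP d D L A Λt P).PosSemidef := by
  open scoped MatrixOrder in
  obtain ⟨R, rfl⟩ := CStarAlgebra.nonneg_iff_eq_star_mul_self.mp hΛt.nonneg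
  suffices hgram : sigmaA d D L A (star R * R) - sigmaAP d D L A (star R * R) P =
      of fun i j => ((R * wordProd A j * (1 - P))ᴴ * (R * wordProd A i * (1 - P))).trace by
    rw [hgram]
    exact posSemidef_of_trace_conjTranspose_mul _
  ext i j
  rw [sigmaA_sub_sigmaAP_apply hP, of_apply]
  simp only [conjTranspose_mul, conjTranspose_sub, conjTranspose_one, hPh, star_eq_conjTranspose,
    Matrix.mul_assoc]

end Sigma

theorem sigmaA_close_to_sigmaAP_general
    (d D L : ℕ)
    (A : Fin d → Matrix (Fin D) (Fin D) ℂ)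
    (Λ : Matrix (Fin D) (Fin D) ℂ) (hΛ : Λ.PosSemidef)
    (hfix : ∑ i, (A i)ᴴ * Λ * A i = Λ)
    (P : Matrix (Fin D) (Fin D) ℂ)
    (hP : Pᴴ = P) (hP2 : P * P = P) (hPΛ : P * Λ = Λ * P) :
    traceNorm (sigmaA d D L A (P * Λ * P) - sigmaAP d D L A (P * Λ * P) P) ≤
      2 * (Λ - P * Λ * P).trace.re := by
  have hPi : IsIdempotentElem P := hP2
  have hcompress : ∀ {X : Matrix (Fin D) (Fin D) ℂ}, X.PosSemidef →
      ((1 - P) * X * (1 - P)).PosSemidef := fun hX => by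
    have h := hX.conjTranspose_mul_mul_same (1 - P)
    rwa [conjTranspose_sub, conjTranspose_one, hP] at h
  have hΛt : (P * Λ * P).PosSemidef := by
    simpa only [hP] using hΛ.conjTranspose_mul_mul_same P
  have hgap : (Λ - P * Λ * P).PosSemidef := by
    rw [← one_sub_mul_mul_one_sub_of_commute hPi hPΛ]
    exact hcompress hΛ
  have hchain := hcompress (sub_dualChannel_iterate_posSemidef hfix hgap L)
  rw [traceNorm_eq_trace_re_of_posSemidef (sigmaA_sub_sigmaAP_posSemidef hΛt hP hPi),
    trace_sigmaA_sub_sigmaAP hPi]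
  calc ((1 - P) * (dualChannel A)^[L] (P * Λ * P) * (1 - P)).trace.re
      ≤ ((1 - P) * Λ * (1 - P)).trace.re := by
        have h := (Complex.nonneg_iff.mp hchain.trace_nonneg).1
        rwa [Matrix.mul_sub (1 - P), Matrix.sub_mul _ _ (1 - P), trace_sub, Complex.sub_re,
          sub_nonneg] at h
    _ = (Λ - P * Λ * P).trace.re := by rw [one_sub_mul_mul_one_sub_of_commute hPi hPΛ]
    _ ≤ 2 * (Λ - P * Λ * P).trace.re := by
        linarith [(Complex.nonneg_iff.mp hgap.trace_nonneg).1]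

/-- `‖σ_A − σ_{A,P}‖₁ ≤ 2δ`, where `Λ̃ = PΛP` and `δ = tr(Λ − Λ̃)`. -/
theorem sigmaA_close_to_sigmaAP
    (d D L : ℕ) (hd : 0 < d) (hD : 0 < D) (hL : 0 < L)
    (A : Fin d → Matrix (Fin D) (Fin D) ℂ)
    (Λ : Matrix (Fin D) (Fin D) ℂ) (hΛ : Λ.PosSemidef) (htr : Λ.trace = 1)
    (hA : ∑ i, A i * (A i)ᴴ = 1)
    (hfix : ∑ i, (A i)ᴴ * Λ * A i = Λ)
    (P : Matrix (Fin D) (Fin D) ℂ)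
    (hP : Pᴴ = P) (hP2 : P * P = P) (hPΛ : P * Λ = Λ * P) :
    traceNorm (sigmaA d D L A (P * Λ * P) - sigmaAP d D L A (P * Λ * P) P) ≤
      2 * (Λ - P * Λ * P).trace.re :=
  sigmaA_close_to_sigmaAP_general d D L A Λ hΛ hfix P hP hP2 hPΛ
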